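/- Let H = {(x,y) ∈ ℝ² : y < L} with L > 0, and let G_H(z,η) = (1/(2π)) ln(|z − η*|/|z − η|) be the Green's function of the half-plane, where η* is the reflection of η across the line y = L, and let H_H(z,z) = (1/(2π)) ln|z − z*| = (1/(2π)) ln(2(L − y)) for z = (x,y). For J ≥ 1, α_{ij} > 0 (i ≠ j), β_i > 0, the functional Ξ⁺(z₁,…,z_J) = Σ_{i≠j} α_{ij} G_H(z_i,z_j) + Σ_i β_i H_H(z_i,z_i), defined on H^J minus the diagonal, has no critical points. -/

import Mathlib

/-- Reflection of a point of `ℝ²` across the horizontal line `y = L`. -/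
noncomputable def reflAcross (L : ℝ) (η : EuclideanSpace ℝ (Fin 2)) :
    EuclideanSpace ℝ (Fin 2) :=
  WithLp.toLp 2 (fun i => if i = 1 then 2 * L - η 1 else η i)

/-- Green's function of the half-plane `H = {y < L}`:
`G_H(z,η) = (1/(2π)) ln(|z−η*|/|z−η|)`, with `η*` the reflection of `η` across `y = L`. -/
noncomputable def greenHalfPlane (L : ℝ) (z η : EuclideanSpace ℝ (Fin 2)) : ℝ :=
  (1 / (2 * Real.pi)) * Real.log (dist z (reflAcross L η) / dist z η)

/-- Robin function (regular part on the diagonal) of the half-plane `H = {y < L}`: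
`H_H(z,z) = (1/(2π)) ln(2(L − y))` for `z = (x,y)`. -/
noncomputable def robinHalfPlane (L : ℝ) (z : EuclideanSpace ℝ (Fin 2)) : ℝ :=
  (1 / (2 * Real.pi)) * Real.log (2 * (L - z 1))

/-!
Move all points simultaneously towards the boundary line `y = L`, i.e. along `(e₂, …, e₂)`.
Mutual distances `|zᵢ − zⱼ|` are unchanged while every `|zᵢ − zⱼ*|` shrinks, so each Green term
decreases, and every Robin term `ln (2 (L − yᵢ))` decreases strictly. Hence `Ξ⁺` has a strictly
negative directional derivative at every admissible configuration.
-/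

open Real RealInnerProductSpace Finset

theorem HasDerivAt.log_norm_div_const {F : Type*} [NormedAddCommGroup F] [InnerProductSpace ℝ F]
    {f : ℝ → F} {f' : F} {x c : ℝ} (hf : HasDerivAt f f' x) (hfx : f x ≠ 0) (hc : c ≠ 0) :
    HasDerivAt (fun t => Real.log (‖f t‖ / c)) (⟪f x, f'⟫ / ‖f x‖ ^ 2) x := by
  have hsq : ∀ t, Real.log (‖f t‖ / c) = Real.log (‖f t‖ ^ 2 / c ^ 2) / 2 := fun t => by
    rw [← div_pow, log_pow]; ring
  simp only [hsq]
  refine (((hf.norm_sq.div_const (c ^ 2)).log (by positivity)).div_const 2).congr_deriv ?_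
  have : ‖f x‖ ≠ 0 := norm_ne_zero_iff.2 hfx
  field_simp

local notation "e₂" => EuclideanSpace.single (1 : Fin 2) (1 : ℝ)

lemma reflAcross_add_smul (L t : ℝ) (w : EuclideanSpace ℝ (Fin 2)) :
    reflAcross L (w + t • e₂) = reflAcross L w - t • e₂ := by
  ext i; fin_cases i <;> simp [reflAcross]; ring

lemma inner_sub_reflAcross_single (L : ℝ) (z w : EuclideanSpace ℝ (Fin 2)) :
    ⟪z - reflAcross L w, e₂⟫ = z 1 + w 1 - 2 * L := by
  simp [EuclideanSpace.inner_single_right, reflAcross]; ring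

lemma reflAcross_ne {L : ℝ} {z w : EuclideanSpace ℝ (Fin 2)} (hz : z 1 < L) (hw : w 1 < L) :
    z ≠ reflAcross L w := by
  intro h
  have := congrArg (· 1) h
  simp [reflAcross] at this
  linarith

lemma hasDerivAt_greenHalfPlane_add_smul {L : ℝ} {z w : EuclideanSpace ℝ (Fin 2)} (hzw : z ≠ w)
    (hzw' : z ≠ reflAcross L w) :
    HasDerivAt (fun t : ℝ => greenHalfPlane L (z + t • e₂) (w + t • e₂))
      (1 / (2 * π) * (2 * (z 1 + w 1 - 2 * L) / dist z (reflAcross L w) ^ 2)) 0 := by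
  have hf : HasDerivAt (fun t : ℝ => z - reflAcross L w + t • (2 : ℝ) • e₂) ((2 : ℝ) • e₂) 0 := by
    simpa using ((hasDerivAt_id (0 : ℝ)).smul_const ((2 : ℝ) • e₂)).const_add (z - reflAcross L w)
  have hlog := hf.log_norm_div_const (by simpa [sub_eq_zero] using hzw') (dist_ne_zero.2 hzw)
  have hfun : (fun t : ℝ => greenHalfPlane L (z + t • e₂) (w + t • e₂)) =
      fun t => 1 / (2 * π) * Real.log (‖z - reflAcross L w + t • (2 : ℝ) • e₂‖ / dist z w) := by
    funext t
    rw [greenHalfPlane, reflAcross_add_smul, dist_add_right, dist_eq_norm]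
    congr 4
    module
  rw [hfun]
  refine (hlog.const_mul (1 / (2 * π))).congr_deriv ?_
  simp [inner_smul_right, inner_sub_reflAcross_single, dist_eq_norm]

lemma hasDerivAt_robinHalfPlane_add_smul {L : ℝ} {z : EuclideanSpace ℝ (Fin 2)} (hz : z 1 ≠ L) :
    HasDerivAt (fun t : ℝ => robinHalfPlane L (z + t • e₂)) (-(1 / (2 * π)) / (L - z 1)) 0 := by
  have hlin : HasDerivAt (fun t : ℝ => 2 * (L - (z 1 + t))) (-2) 0 := by
    simpa using (((hasDerivAt_id (0 : ℝ)).const_add (z 1)).const_sub L).const_mul 2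
  have hne : L - z 1 ≠ 0 := sub_ne_zero.2 hz.symm
  have hfun : (fun t : ℝ => robinHalfPlane L (z + t • e₂)) =
      fun t => 1 / (2 * π) * Real.log (2 * (L - (z 1 + t))) := by
    funext t; simp [robinHalfPlane]
  rw [hfun]
  refine ((hlin.log (by simpa using hne)).const_mul (1 / (2 * π))).congr_deriv ?_
  simp only [add_zero]
  field_simp

noncomputable def greenPlusFunctional (L : ℝ) {J : ℕ} (α : Fin J → Fin J → ℝ) (β : Fin J → ℝ)
    (w : Fin J → EuclideanSpace ℝ (Fin 2)) : ℝ :=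
  (∑ i : Fin J, ∑ j : Fin J, if i = j then 0 else α i j * greenHalfPlane L (w i) (w j))
    + ∑ i : Fin J, β i * robinHalfPlane L (w i)

theorem exists_neg_hasDerivAt_greenPlusFunctional_vertical {L : ℝ} {J : ℕ} [Nonempty (Fin J)]
    {α : Fin J → Fin J → ℝ} (hα : ∀ i j, i ≠ j → 0 < α i j) {β : Fin J → ℝ} (hβ : ∀ i, 0 < β i)
    {z : Fin J → EuclideanSpace ℝ (Fin 2)} (hzH : ∀ i, z i 1 < L) (hz : Function.Injective z) :
    ∃ D < 0, HasDerivAt (fun t : ℝ => greenPlusFunctional L α β (z + t • fun _ => e₂)) D 0 := by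
  set c := 1 / (2 * π)
  have hc : 0 < c := by positivity
  set g : Fin J → Fin J → ℝ := fun i j => if i = j then 0 else
    α i j * (c * (2 * (z i 1 + z j 1 - 2 * L) / dist (z i) (reflAcross L (z j)) ^ 2))
  set r : Fin J → ℝ := fun i => β i * (-c / (L - z i 1))
  have hg : ∀ i j, g i j ≤ 0 := fun i j => by
    by_cases hij : i = j
    · simp [g, hij]
    · simp only [g, hij, if_false]
      have := hzH i; have := hzH j
      exact mul_nonpos_of_nonneg_of_nonpos (hα i j hij).le <| mul_nonpos_of_nonneg_of_nonpos hc.le <|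
        div_nonpos_of_nonpos_of_nonneg (by linarith) (by positivity)
  have hr : ∀ i, r i < 0 := fun i =>
    mul_neg_of_pos_of_neg (hβ i) (div_neg_of_neg_of_pos (neg_neg_of_pos hc) (sub_pos.2 (hzH i)))
  refine ⟨(∑ i, ∑ j, g i j) + ∑ i, r i,
    add_neg_of_nonpos_of_neg (sum_nonpos fun i _ => sum_nonpos fun j _ => hg i j)
      (sum_neg (fun i _ => hr i) univ_nonempty), ?_⟩
  refine .add (.fun_sum fun i _ => .fun_sum fun j _ => ?_)
    (.fun_sum fun i _ => (hasDerivAt_robinHalfPlane_add_smul (hzH i).ne).const_mul (β i))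
  by_cases hij : i = j
  · simpa [g, hij] using hasDerivAt_const (0 : ℝ) (0 : ℝ)
  · simp only [g, hij, if_false]
    exact (hasDerivAt_greenHalfPlane_add_smul (hz.ne hij)
      (reflAcross_ne (hzH i) (hzH j))).const_mul (α i j)

theorem no_critical_points_green_plus (L : ℝ)
    (J : ℕ) (hJ : 1 ≤ J)
    (α : Fin J → Fin J → ℝ) (hα : ∀ i j, i ≠ j → 0 < α i j)
    (β : Fin J → ℝ) (hβ : ∀ i, 0 < β i)
    (z : Fin J → EuclideanSpace ℝ (Fin 2))
    (hzH : ∀ i, z i 1 < L) (hz : Function.Injective z) :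
    ¬ HasFDerivAt
        (fun w : Fin J → EuclideanSpace ℝ (Fin 2) =>
          (∑ i : Fin J, ∑ j : Fin J,
            if i = j then 0 else α i j * greenHalfPlane L (w i) (w j))
          + ∑ i : Fin J, β i * robinHalfPlane L (w i))
        (0 : (Fin J → EuclideanSpace ℝ (Fin 2)) →L[ℝ] ℝ) z := by
  intro hcrit
  have : Nonempty (Fin J) := ⟨⟨0, hJ⟩⟩
  obtain ⟨D, hD, hderiv⟩ := exists_neg_hasDerivAt_greenPlusFunctional_vertical hα hβ hzH hz
  have hshift : HasDerivAt (fun t : ℝ => z + t • fun _ => e₂) (fun _ => e₂) 0 := by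
    simpa using ((hasDerivAt_id (0 : ℝ)).smul_const fun _ : Fin J => e₂).const_add z
  have hzero : HasDerivAt (fun t : ℝ => greenPlusFunctional L α β (z + t • fun _ => e₂)) 0 0 := by
    have := hcrit.comp_hasDerivAt_of_eq (0 : ℝ) hshift (by simp)
    rwa [zero_apply] at this
  exact hD.ne (hderiv.unique hzero)
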